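/- arXiv:2512.22477 — 6 statements merged into one kernel-verified Lean document; each statement's English description precedes it below -/
import Mathlib

section
/- The MIX axiom is valid: [∘⁺]ᵢφ → φ ∧ [≈]ᵢ Iᵢ [∘⁺]ᵢφ holds at every world of every epistemic model with awareness. -/
inductive Form (P G : Type) : Type
  | atom : P → Form P G
  | neg : Form P G → Form P G
  | conj : Form P G → Form P G → Form P G
  | Aw : G → Form P G → Form P G
  | Ik : G → Form P G → Form P G
  | Ek : G → Form P G → Form P G
  | boxEq : G → Form P G → Form P G
  | boxPlus : G → Form P G → Form P G

/-- The set of atomic propositions occurring in a formula. -/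
def Form.At {P G : Type} : Form P G → Set P
  | .atom p => {p}
  | .neg φ => φ.At
  | .conj φ ψ => φ.At ∪ ψ.At
  | .Aw _ φ => φ.At
  | .Ik _ φ => φ.At
  | .Ek _ φ => φ.At
  | .boxEq _ φ => φ.At
  | .boxPlus _ φ => φ.At

/-- An epistemic model with awareness. -/
structure AwModel (P G W : Type) where
  nonempty : Nonempty W
  rel : G → W → W → Prop
  rel_equiv : ∀ i, Equivalence (rel i)
  aw : G → W → Set P
  ka : ∀ i w v, rel i w v → aw i w = aw i v
  val : P → Set W

/-- The A-equivalence relation ≈ᵢ. -/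
def AwModel.aeq {P G W : Type} (M : AwModel P G W) (i : G) (w v : W) : Prop :=
  M.aw i w = M.aw i v ∧ ∀ p ∈ M.aw i w, (w ∈ M.val p ↔ v ∈ M.val p)

/-- The EK-accessibility relation (∼ᵢ ∘ ≈ᵢ)⁺: transitive closure of
    {(w,v) : ∃ u, w ≈ᵢ u ∧ u ∼ᵢ v}. -/
def AwModel.ek {P G W : Type} (M : AwModel P G W) (i : G) : W → W → Prop :=
  Relation.TransGen (Relation.Comp (M.aeq i) (M.rel i))

/-- Satisfaction relation of AIL. -/
def AwModel.sat {P G W : Type} (M : AwModel P G W) : W → Form P G → Prop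
  | w, .atom p => w ∈ M.val p
  | w, .neg φ => ¬ M.sat w φ
  | w, .conj φ ψ => M.sat w φ ∧ M.sat w ψ
  | w, .Aw i φ => φ.At ⊆ M.aw i w
  | w, .Ik i φ => ∀ v, M.rel i w v → M.sat v φ
  | w, .Ek i φ => φ.At ⊆ M.aw i w ∧ ∀ v, M.ek i w v → M.sat v φ
  | w, .boxEq i φ => ∀ v, M.aeq i w v → M.sat v φ
  | w, .boxPlus i φ => ∀ v, M.ek i w v → M.sat v φ

theorem axiom_MIX {P G W : Type} (M : AwModel P G W) (w : W) (i : G) (φ : Form P G)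
    (h : M.sat w (.boxPlus i φ)) :
    M.sat w (.conj φ (.boxEq i (.Ik i (.boxPlus i φ)))) := by
  constructor
  · exact h w (Relation.TransGen.single ⟨w, ⟨rfl, fun _ _ => Iff.rfl⟩, (M.rel_equiv i).refl w⟩)
  · intro v hwv u hvu x hux
    exact h x (Relation.TransGen.head ⟨v, hwv, hvu⟩ hux)
end

section
/- The induction axiom IND is valid: [∘⁺]ᵢ(φ → [≈]ᵢ Iᵢ φ) → (φ → [∘⁺]ᵢφ) holds at every world of every epistemic model with awareness. -/
/-- Material implication as a derived connective. -/
def Form.impl {P G : Type} (φ ψ : Form P G) : Form P G :=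
  .neg (.conj φ (.neg ψ))

theorem axiom_IND {P G W : Type} (M : AwModel P G W) (w : W) (i : G) (φ : Form P G)
    (h1 : M.sat w (.boxPlus i (Form.impl φ (.boxEq i (.Ik i φ)))))
    (h2 : M.sat w φ) :
    M.sat w (.boxPlus i φ) := by
  intro v hv
  induction hv with
  | single h =>
    obtain ⟨u, hwu, huv⟩ := h
    have hw : M.ek i w w :=
      Relation.TransGen.single ⟨w, ⟨rfl, fun p _ => Iff.rfl⟩, (M.rel_equiv i).refl w⟩
    have himp := h1 w hw
    simp only [Form.impl, AwModel.sat, not_and, not_not] at himp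
    exact himp h2 u hwu _ huv
  | tail hwu h ih =>
    obtain ⟨x, hux, hxv⟩ := h
    have himp := h1 _ hwu
    simp only [Form.impl, AwModel.sat, not_and, not_not] at himp
    exact himp ih x hux _ hxv
end

section
/- There exist an epistemic model with awareness M, a world w, and a formula φ such that M,w ⊨ Iᵢφ ∧ Aᵢφ but M,w ⊭ Eᵢφ. Hence Iᵢφ ∧ Aᵢφ → Eᵢφ is not valid in AIL. -/
private def cexM : AwModel ℕ Unit (Fin 3) where
  nonempty := ⟨0⟩
  rel := fun _ w v => w = v ∨ (w ≠ 0 ∧ v ≠ 0)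
  rel_equiv := fun _ => ⟨fun _ => Or.inl rfl,
    fun h => by
      rcases h with h | ⟨h1, h2⟩
      · exact Or.inl h.symm
      · exact Or.inr ⟨h2, h1⟩,
    fun h h' => by
      rcases h with h | ⟨h1, h2⟩
      · subst h; exact h'
      · rcases h' with h | ⟨h3, h4⟩
        · subst h; exact Or.inr ⟨h1, h2⟩
        · exact Or.inr ⟨h1, h4⟩⟩
  aw := fun _ _ => {0}
  ka := fun _ _ _ _ => rfl
  val := fun p => if p = 0 then {0, 1} else ∅

theorem ik_and_aw_not_implies_ek :
    ∃ (W : Type) (M : AwModel ℕ Unit W) (w : W) (φ : Form ℕ Unit),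
      M.sat w (.Ik () φ) ∧ M.sat w (.Aw () φ) ∧ ¬ M.sat w (.Ek () φ) := by
  refine ⟨Fin 3, cexM, 0, .atom 0, ?_, ?_, ?_⟩
  · intro v hv
    rcases hv with h | ⟨h1, _⟩
    · subst h; simp [AwModel.sat, cexM]
    · exact absurd rfl h1
  · simp [AwModel.sat, Form.At, cexM]
  · intro ⟨_, h⟩
    have hek : cexM.ek () (0 : Fin 3) 2 := by
      refine Relation.TransGen.single ⟨1, ⟨rfl, ?_⟩, Or.inr ⟨by decide, by decide⟩⟩
      intro p hp
      simp only [cexM, Set.mem_singleton_iff] at hp ⊢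
      subst hp
      simp
    have := h 2 hek
    simp [AwModel.sat, cexM] at this
end

section
/- Weak negative introspection for explicit knowledge is valid: ¬Eᵢφ ∧ Aᵢφ → Eᵢ¬Eᵢφ holds at every world of every epistemic model with awareness. -/
lemma aeq_refl {P G W : Type} (M : AwModel P G W) (i : G) (w : W) : M.aeq i w w :=
  ⟨rfl, fun _ _ => Iff.rfl⟩

lemma aeq_symm {P G W : Type} (M : AwModel P G W) (i : G) {w v : W}
    (h : M.aeq i w v) : M.aeq i v w :=
  ⟨h.1.symm, fun p hp => (h.2 p (h.1 ▸ hp)).symm⟩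

lemma comp_rev {P G W : Type} (M : AwModel P G W) (i : G) {w v : W}
    (h : Relation.Comp (M.aeq i) (M.rel i) w v) : M.ek i v w := by
  obtain ⟨u, hau, hru⟩ := h
  exact Relation.TransGen.head ⟨v, aeq_refl M i v, (M.rel_equiv i).symm hru⟩
    (Relation.TransGen.single ⟨w, aeq_symm M i hau, (M.rel_equiv i).refl w⟩)

lemma ek_symm {P G W : Type} (M : AwModel P G W) (i : G) {w v : W}
    (h : M.ek i w v) : M.ek i v w := by
  induction h with
  | single hc => exact comp_rev M i hc
  | tail _ hc ih => exact Relation.TransGen.trans (comp_rev M i hc) ih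

theorem weak_negative_introspection {P G W : Type} (M : AwModel P G W) (w : W) (i : G)
    (φ : Form P G) (h1 : ¬ M.sat w (.Ek i φ)) (h2 : M.sat w (.Aw i φ)) :
    M.sat w (.Ek i (.neg (.Ek i φ))) := by
  refine ⟨h2, fun v hv hsat => h1 ?_⟩
  refine ⟨h2, fun u hu => hsat.2 u (Relation.TransGen.trans (ek_symm M i hv) hu)⟩
end

section
/- Positive introspection for explicit knowledge is valid: Eᵢφ → EᵢEᵢφ holds at every world of every epistemic model with awareness. -/
theorem ek_positive_introspection {P G W : Type} (M : AwModel P G W) (w : W) (i : G)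
    (φ : Form P G) (h : M.sat w (.Ek i φ)) :
    M.sat w (.Ek i (.Ek i φ)) := by
  obtain ⟨hAt, hall⟩ := h
  have haw : ∀ v, M.ek i w v → M.aw i w = M.aw i v := by
    intro v hv
    induction hv with
    | single h => obtain ⟨u, hu, hr⟩ := h; exact hu.1.trans (M.ka i _ _ hr)
    | tail _ h ih => obtain ⟨u, hu, hr⟩ := h; exact ih.trans (hu.1.trans (M.ka i _ _ hr))
  refine ⟨hAt, fun v hv => ⟨haw v hv ▸ hAt, fun u hu => hall u (hv.trans hu)⟩⟩
end

section
/- The language of AIL is strictly more expressive than the FH language: there exist two pointed epistemic models with awareness (M,w) and (M',w') that are FH-bisimilar (hence satisfy the same FH formulas), yet M,w ⊨ Eᵢp and M',w' ⊨ ¬Eᵢp under AIL semantics; consequently no FH formula is semantically equivalent to the AIL formula Eᵢp. -/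
/-- Formulas of the FH language: atoms, ¬, ∧, Aᵢ, Iᵢ, Eᵢ. -/
inductive FHForm (P G : Type) : Type
  | atom : P → FHForm P G
  | neg : FHForm P G → FHForm P G
  | conj : FHForm P G → FHForm P G → FHForm P G
  | Aw : G → FHForm P G → FHForm P G
  | Ik : G → FHForm P G → FHForm P G
  | Ek : G → FHForm P G → FHForm P G

def FHForm.At {P G : Type} : FHForm P G → Set P
  | .atom p => {p}
  | .neg φ => φ.At
  | .conj φ ψ => φ.At ∪ ψ.At
  | .Aw _ φ => φ.At
  | .Ik _ φ => φ.At
  | .Ek _ φ => φ.At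

/-- FH satisfaction: Eᵢφ is interpreted as Aᵢφ ∧ Iᵢφ. -/
def AwModel.satFH {P G W : Type} (M : AwModel P G W) : W → FHForm P G → Prop
  | w, .atom p => w ∈ M.val p
  | w, .neg φ => ¬ M.satFH w φ
  | w, .conj φ ψ => M.satFH w φ ∧ M.satFH w ψ
  | w, .Aw i φ => φ.At ⊆ M.aw i w
  | w, .Ik i φ => ∀ v, M.rel i w v → M.satFH v φ
  | w, .Ek i φ => φ.At ⊆ M.aw i w ∧ ∀ v, M.rel i w v → M.satFH v φ

/-- A bisimulation between epistemic models with awareness. -/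
def IsBisim {P G W W' : Type} (M : AwModel P G W) (M' : AwModel P G W')
    (B : W → W' → Prop) : Prop :=
  ∀ w w', B w w' →
    (∀ p : P, w ∈ M.val p ↔ w' ∈ M'.val p) ∧
    (∀ (i : G) (v : W), M.rel i w v → ∃ v', M'.rel i w' v' ∧ B v v') ∧
    (∀ (i : G) (v' : W'), M'.rel i w' v' → ∃ v, M.rel i w v ∧ B v v') ∧
    (∀ i : G, M.aw i w = M'.aw i w')

lemma fh_invariance {P G W W' : Type} {M : AwModel P G W} {M' : AwModel P G W'}
    {B : W → W' → Prop} (h : IsBisim M M' B) :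
    ∀ (ψ : FHForm P G) (w : W) (w' : W'), B w w' → (M.satFH w ψ ↔ M'.satFH w' ψ) := by
  intro ψ
  induction ψ with
  | atom p => intro w w' hB; exact (h w w' hB).1 p
  | neg φ ih => intro w w' hB; simp only [AwModel.satFH]; exact not_congr (ih w w' hB)
  | conj φ χ ih1 ih2 =>
      intro w w' hB; simp only [AwModel.satFH]
      exact and_congr (ih1 w w' hB) (ih2 w w' hB)
  | Aw i φ ih =>
      intro w w' hB; simp only [AwModel.satFH]
      rw [(h w w' hB).2.2.2 i]
  | Ik i φ ih =>
      intro w w' hB; simp only [AwModel.satFH]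
      constructor
      · intro hall v' hrel
        obtain ⟨v, hv, hBv⟩ := (h w w' hB).2.2.1 i v' hrel
        exact (ih v v' hBv).mp (hall v hv)
      · intro hall v hrel
        obtain ⟨v', hv', hBv⟩ := (h w w' hB).2.1 i v hrel
        exact (ih v v' hBv).mpr (hall v' hv')
  | Ek i φ ih =>
      intro w w' hB; simp only [AwModel.satFH]
      apply and_congr
      · rw [(h w w' hB).2.2.2 i]
      constructor
      · intro hall v' hrel
        obtain ⟨v, hv, hBv⟩ := (h w w' hB).2.2.1 i v' hrel
        exact (ih v v' hBv).mp (hall v hv)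
      · intro hall v hrel
        obtain ⟨v', hv', hBv⟩ := (h w w' hB).2.1 i v hrel
        exact (ih v v' hBv).mpr (hall v' hv')

def M1 : AwModel ℕ Unit Unit where
  nonempty := ⟨()⟩
  rel _ _ _ := True
  rel_equiv _ := ⟨fun _ => trivial, fun _ => trivial, fun _ _ => trivial⟩
  aw _ _ := {0}
  ka _ _ _ _ := rfl
  val p := if p = 0 then Set.univ else ∅

def M2 : AwModel ℕ Unit (Fin 3) where
  nonempty := ⟨0⟩
  rel _ a b := (a = 0 ↔ b = 0)
  rel_equiv _ := ⟨fun _ => Iff.rfl, Iff.symm, Iff.trans⟩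
  aw _ _ := {0}
  ka _ _ _ _ := rfl
  val p := if p = 0 then {x | x = 0 ∨ x = 1} else ∅

/-- AIL is strictly more expressive than the FH language: there are FH-bisimilar
pointed models disagreeing on the AIL formula Eᵢp; hence no FH formula is
semantically equivalent to Eᵢp. -/
theorem ail_more_expressive_than_fh :
    (∃ (W W' : Type) (M : AwModel ℕ Unit W) (M' : AwModel ℕ Unit W')
        (w : W) (w' : W') (B : W → W' → Prop),
      IsBisim M M' B ∧ B w w' ∧
      M.sat w (.Ek () (.atom 0)) ∧ ¬ M'.sat w' (.Ek () (.atom 0))) ∧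
    ∀ ψ : FHForm ℕ Unit,
      ¬ ∀ (W : Type) (M : AwModel ℕ Unit W) (w : W),
          (M.sat w (.Ek () (.atom 0)) ↔ M.satFH w ψ) := by
  have hBisim : IsBisim M1 M2 (fun _ w' => w' = 0) := by
    intro w w' hB
    subst hB
    refine ⟨?_, ?_, ?_, fun _ => rfl⟩
    · intro p
      by_cases hp : p = 0 <;> simp [M1, M2, hp]
    · intro i v _
      exact ⟨0, Iff.rfl, rfl⟩
    · intro i v' hrel
      exact ⟨(), trivial, hrel.mp rfl⟩
  have hsat1 : M1.sat () (.Ek () (.atom 0)) := by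
    constructor
    · intro p hp
      simp only [Form.At, Set.mem_singleton_iff] at hp
      simp [M1, hp]
    · intro v _
      simp [AwModel.sat, M1]
  have hek : M2.ek () 0 2 := by
    apply Relation.TransGen.single
    refine ⟨1, ⟨rfl, ?_⟩, ?_⟩
    · intro p hp
      simp only [M2, Set.mem_singleton_iff] at hp
      simp [M2, hp]
    · simp [M2]
  have hnsat2 : ¬ M2.sat (0 : Fin 3) (.Ek () (.atom 0)) := by
    intro ⟨_, hall⟩
    have := hall 2 hek
    simp [AwModel.sat, M2] at this
  refine ⟨⟨Unit, Fin 3, M1, M2, (), 0, fun _ w' => w' = 0, hBisim, rfl, hsat1, hnsat2⟩, ?_⟩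
  intro ψ h
  have h1 : M1.satFH () ψ := (h Unit M1 ()).mp hsat1
  have h2 : M2.satFH 0 ψ := (fh_invariance hBisim ψ () 0 rfl).mp h1
  exact hnsat2 ((h (Fin 3) M2 0).mpr h2)
end
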